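/- Truncated SVD-STP error bound: let A ∈ ℝ^{n₁×n₂} with s₁|n₁, s₂|n₂, and let A = U_r⋉Σ_r⋉V_rᵀ + E₂ be the truncated SVD-STP of A with truncation rank r ≤ p = min{n₁/s₁, n₂/s₂}. Then ‖E₂‖_F ≤ √(Σ_{i=2}^q σ̃ᵢ²) + √(Σ_{i=r+1}^p ‖Sᵢ‖_F²), where σ̃₂ ≥ ⋯ ≥ σ̃_q are the singular values of the rearrangement Ã of A except the largest, q = min{s₁s₂, n₁n₂/(s₁s₂)}, and S₁,…,S_p are the diagonal blocks of the full SVD-STP's Σ. -/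

import Mathlib

/-!
Padding `U_r`, `V_r` back to `U`, `V`, the truncated product differs from the full one by
`(U ⊗ I) ⋅ blkdiag(0, …, 0, S_{r+1}, …, S_p) ⋅ (V ⊗ I)ᵀ`, because `(M ⊗ I) ⋅ blkdiag(S) ⋅ (N ⊗ I)ᵀ`
is the sum `∑ₖ mₖ nₖᵀ ⊗ Sₖ` over the columns of `M` and `N`. Hence `E₂ = E₁ + D` for that tail
term `D`. Since `U ⊗ I` and `V ⊗ I` are orthogonal, `‖D‖_F = √(∑_{i>r} ‖Sᵢ‖_F²)`, and the
triangle inequality gives the bound.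
-/

open Matrix Kronecker

/-- The Frobenius norm of a real matrix. -/
noncomputable def frob {α β : Type*} [Fintype α] [Fintype β] (M : Matrix α β ℝ) : ℝ :=
  Real.sqrt (∑ i, ∑ j, (M i j) ^ 2)

/-- The Van Loan–Pitsianis rearrangement `Ã` of a matrix `A ∈ ℝ^{m₁m₂×n₁n₂}` (rows
indexed by `(i,a) : Fin m₁ × Fin m₂`, columns by `(j,b) : Fin n₁ × Fin n₂`, so the
`(i,j)` block of size `m₂×n₂` is `A_{i,j}(a,b) = A (i,a) (j,b)`): the `((j-1)m₁+i)`-th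
row of `Ã` is `vec(A_{i,j})ᵀ`, where `vec` is column-major. -/
def rearrange {m₁ m₂ n₁ n₂ : ℕ} (A : Matrix (Fin m₁ × Fin m₂) (Fin n₁ × Fin n₂) ℝ) :
    Matrix (Fin n₁ × Fin m₁) (Fin n₂ × Fin m₂) ℝ :=
  Matrix.of fun x y => A (x.2, y.2) (x.1, y.1)

/-- The rectangular block-diagonal matrix `blkdiag(S₁,…,S_p) ∈ ℝ^{p₁s₁×p₂s₂}` obtained by
aligning the `s₁×s₂` blocks `S₁,…,S_p` along the diagonal (all other blocks zero). -/
noncomputable def blkdiag {s₁ s₂ : ℕ} (p₁ p₂ p : ℕ)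
    (S : Fin p → Matrix (Fin s₁) (Fin s₂) ℝ) :
    Matrix (Fin p₁ × Fin s₁) (Fin p₂ × Fin s₂) ℝ :=
  Matrix.of fun x y =>
    if h : (x.1 : ℕ) = (y.1 : ℕ) ∧ (x.1 : ℕ) < p then S ⟨x.1, h.2⟩ x.2 y.2 else 0

section Frobenius

variable {α β γ δ : Type*} [Fintype α] [Fintype β] [Fintype γ] [Fintype δ]

theorem frob_sq (M : Matrix α β ℝ) : frob M ^ 2 = ∑ i, ∑ j, M i j ^ 2 :=
  Real.sq_sqrt (by positivity)

attribute [local instance] Matrix.frobeniusNormedAddCommGroup in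
theorem frob_eq_norm (M : Matrix α β ℝ) : frob M = ‖M‖ := by
  have hsq : ∀ x : ℝ, ‖x‖ ^ (2 : ℝ) = x ^ 2 := fun x => by
    rw [Real.rpow_two, Real.norm_eq_abs, sq_abs]
  simp only [frobenius_norm_def, frob, Real.sqrt_eq_rpow, hsq, one_div]

attribute [local instance] Matrix.frobeniusNormedAddCommGroup in
theorem frob_add_le (M N : Matrix α β ℝ) : frob (M + N) ≤ frob M + frob N := by
  simpa only [frob_eq_norm] using norm_add_le M N

theorem sum_sq_eq_trace_transpose_mul_self (M : Matrix α β ℝ) :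
    ∑ i, ∑ j, M i j ^ 2 = (Mᵀ * M).trace := by
  rw [trace, Finset.sum_comm]
  simp [mul_apply, sq]

theorem frob_mul_mul_transpose [DecidableEq β] [DecidableEq δ] {O₁ : Matrix α β ℝ}
    {O₂ : Matrix γ δ ℝ} (h₁ : O₁ᵀ * O₁ = 1) (h₂ : O₂ᵀ * O₂ = 1) (T : Matrix β δ ℝ) :
    frob (O₁ * T * O₂ᵀ) = frob T := by
  have hgram : (O₁ * T * O₂ᵀ)ᵀ * (O₁ * T * O₂ᵀ) = O₂ * (Tᵀ * T) * O₂ᵀ := by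
    simp only [transpose_mul, transpose_transpose, Matrix.mul_assoc]
    rw [← Matrix.mul_assoc O₁ᵀ, h₁, Matrix.one_mul]
  rw [frob, frob, sum_sq_eq_trace_transpose_mul_self, sum_sq_eq_trace_transpose_mul_self, hgram,
    trace_mul_comm, ← Matrix.mul_assoc, h₂, Matrix.one_mul]

end Frobenius

theorem transpose_mul_self_kronecker_one {R m n s : Type*} [CommSemiring R] [Fintype m]
    [Fintype s] [DecidableEq n] [DecidableEq s] {O : Matrix m n R} (hO : Oᵀ * O = 1) :
    (O ⊗ₖ (1 : Matrix s s R))ᵀ * (O ⊗ₖ (1 : Matrix s s R)) = 1 := by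
  rw [← kroneckerMap_transpose, transpose_one, ← mul_kronecker_mul, hO, Matrix.one_mul,
    one_kronecker_one]

theorem kronecker_one_mul_kronecker_mul_transpose {R l m n o t₁ t₂ : Type*} [CommSemiring R]
    [Fintype m] [Fintype n] [Fintype t₁] [Fintype t₂] [DecidableEq m] [DecidableEq n]
    [DecidableEq t₁] [DecidableEq t₂] (M : Matrix l m R) (N : Matrix o n R) (a : m) (b : n)
    (T : Matrix t₁ t₂ R) :
    (M ⊗ₖ (1 : Matrix t₁ t₁ R)) * (vecMulVec (Pi.single a 1) (Pi.single b 1) ⊗ₖ T) *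
      (N ⊗ₖ (1 : Matrix t₂ t₂ R))ᵀ = vecMulVec (M.col a) (N.col b) ⊗ₖ T := by
  rw [← kroneckerMap_transpose, transpose_one, ← mul_kronecker_mul, ← mul_kronecker_mul,
    Matrix.one_mul, Matrix.mul_one, mul_vecMulVec, vecMulVec_mul, mulVec_single_one,
    single_vecMul, one_smul, row_transpose]

theorem Fin.sum_univ_eq_sum_castLE_add {M : Type*} [AddCommMonoid M] {r p : ℕ} (h : r ≤ p)
    (f : Fin p → M) :
    ∑ k, f k = ∑ k : Fin r, f (Fin.castLE h k) + ∑ k : Fin p, if r ≤ (k : ℕ) then f k else 0 := by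
  have hhead : ∑ k : Fin r, f (Fin.castLE h k) = ∑ k : Fin p, if (k : ℕ) < r then f k else 0 :=
    Fintype.sum_of_injective _ (Fin.castLE_injective h) _ _
      (fun k hk => if_neg fun hkr => hk ⟨⟨k, hkr⟩, rfl⟩) fun k => (if_pos k.2).symm
  rw [hhead, ← Finset.sum_add_distrib]
  refine Finset.sum_congr rfl fun k _ => ?_
  by_cases hk : (k : ℕ) < r
  · simp [hk, not_le.mpr hk]
  · simp [hk, not_lt.mp hk]

section BlockDiagonal

variable {s₁ s₂ p₁ p₂ p : ℕ}

theorem blkdiag_eq_sum_kronecker (h₁ : p ≤ p₁) (h₂ : p ≤ p₂)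
    (S : Fin p → Matrix (Fin s₁) (Fin s₂) ℝ) :
    blkdiag p₁ p₂ p S =
      ∑ k, vecMulVec (Pi.single (Fin.castLE h₁ k) 1) (Pi.single (Fin.castLE h₂ k) 1) ⊗ₖ S k := by
  ext ⟨i, a⟩ ⟨j, c⟩
  simp only [blkdiag, of_apply, Matrix.sum_apply, kroneckerMap_apply, vecMulVec_apply,
    Pi.single_apply, Fin.ext_iff, Fin.val_castLE, mul_ite, mul_one, mul_zero, ite_mul,
    one_mul, zero_mul]
  split_ifs with h
  · rw [Finset.sum_eq_single ⟨i, h.2⟩] <;> grind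
  · exact (Finset.sum_eq_zero fun k _ => by grind).symm

theorem kronecker_one_mul_blkdiag_mul_transpose {m n : Type*} (h₁ : p ≤ p₁) (h₂ : p ≤ p₂)
    (M : Matrix m (Fin p₁) ℝ) (N : Matrix n (Fin p₂) ℝ) (S : Fin p → Matrix (Fin s₁) (Fin s₂) ℝ) :
    (M ⊗ₖ (1 : Matrix (Fin s₁) (Fin s₁) ℝ)) * blkdiag p₁ p₂ p S *
        (N ⊗ₖ (1 : Matrix (Fin s₂) (Fin s₂) ℝ))ᵀ =
      ∑ k, vecMulVec (M.col (Fin.castLE h₁ k)) (N.col (Fin.castLE h₂ k)) ⊗ₖ S k := by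
  simp only [blkdiag_eq_sum_kronecker h₁ h₂, Matrix.mul_sum, Matrix.sum_mul,
    kronecker_one_mul_kronecker_mul_transpose]

theorem frob_blkdiag (h₁ : p ≤ p₁) (h₂ : p ≤ p₂) (S : Fin p → Matrix (Fin s₁) (Fin s₂) ℝ) :
    frob (blkdiag p₁ p₂ p S) = √(∑ k, frob (S k) ^ 2) := by
  rw [frob]
  congr 1
  simp only [frob_sq, ← Fintype.sum_prod_type']
  symm
  refine Fintype.sum_of_injective
    (fun x => ((Fin.castLE h₁ x.1, x.2.1), (Fin.castLE h₂ x.1, x.2.2))) ?_ _ _ ?_ ?_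
  · rintro ⟨k, a, c⟩ ⟨k', a', c'⟩ h
    simp_all [Fin.ext_iff]
  · rintro ⟨⟨i, a⟩, ⟨j, c⟩⟩ hx
    simp only [blkdiag, of_apply]
    rw [dif_neg, zero_pow two_ne_zero]
    rintro ⟨hij, hip⟩
    exact hx ⟨(⟨i, hip⟩, a, c), by simp [Fin.ext_iff, hij]⟩
  · rintro ⟨k, a, c⟩
    simp [blkdiag, k.2]

theorem kronecker_one_mul_blkdiag_mul_transpose_eq_truncation_add {m n : Type*} {r : ℕ}
    (h₁ : p ≤ p₁) (h₂ : p ≤ p₂) (hr : r ≤ p) (M : Matrix m (Fin p₁) ℝ) (N : Matrix n (Fin p₂) ℝ)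
    (S : Fin p → Matrix (Fin s₁) (Fin s₂) ℝ) :
    (M ⊗ₖ (1 : Matrix (Fin s₁) (Fin s₁) ℝ)) * blkdiag p₁ p₂ p S *
        (N ⊗ₖ (1 : Matrix (Fin s₂) (Fin s₂) ℝ))ᵀ =
      (M.submatrix id (Fin.castLE (hr.trans h₁)) ⊗ₖ (1 : Matrix (Fin s₁) (Fin s₁) ℝ)) *
          blkdiag r r r (fun k => S (Fin.castLE hr k)) *
          (N.submatrix id (Fin.castLE (hr.trans h₂)) ⊗ₖ (1 : Matrix (Fin s₂) (Fin s₂) ℝ))ᵀ +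
        (M ⊗ₖ (1 : Matrix (Fin s₁) (Fin s₁) ℝ)) *
          blkdiag p₁ p₂ p (fun k => if r ≤ (k : ℕ) then S k else 0) *
          (N ⊗ₖ (1 : Matrix (Fin s₂) (Fin s₂) ℝ))ᵀ := by
  simp only [kronecker_one_mul_blkdiag_mul_transpose h₁ h₂,
    kronecker_one_mul_blkdiag_mul_transpose le_rfl le_rfl]
  rw [Fin.sum_univ_eq_sum_castLE_add hr]
  congr 1
  refine Finset.sum_congr rfl fun k _ => ?_
  split_ifs <;> simp

end BlockDiagonal

theorem truncated_svd_stp_error_bound_general {p₁ s₁ p₂ s₂ r : ℕ}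
    (hr : r ≤ min p₁ p₂)
    (A : Matrix (Fin p₁ × Fin s₁) (Fin p₂ × Fin s₂) ℝ)
    -- the singular values of the rearrangement Ã, via a thin SVD
    (σ : Fin (min (s₁ * s₂) (p₁ * p₂)) → ℝ)
    -- the full SVD-STP of A
    (U : Matrix (Fin p₁) (Fin p₁) ℝ) (V : Matrix (Fin p₂) (Fin p₂) ℝ)
    (hU : Uᵀ * U = 1) (hV : Vᵀ * V = 1)
    (S : Fin (min p₁ p₂) → Matrix (Fin s₁) (Fin s₂) ℝ)
    (E₁ : Matrix (Fin p₁ × Fin s₁) (Fin p₂ × Fin s₂) ℝ)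
    (hfull : A = (U ⊗ₖ (1 : Matrix (Fin s₁) (Fin s₁) ℝ)) * blkdiag p₁ p₂ (min p₁ p₂) S *
        ((V ⊗ₖ (1 : Matrix (Fin s₂) (Fin s₂) ℝ)))ᵀ + E₁)
    (hE₁ : frob E₁ = Real.sqrt (∑ i ∈ Finset.univ.filter
        (fun i : Fin (min (s₁ * s₂) (p₁ * p₂)) => (i : ℕ) ≠ 0), σ i ^ 2))
    -- the truncated SVD-STP of A
    (Ur : Matrix (Fin p₁) (Fin r) ℝ) (Vr : Matrix (Fin p₂) (Fin r) ℝ)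
    (hUr : ∀ i j, Ur i j = U i (Fin.castLE (hr.trans (min_le_left _ _)) j))
    (hVr : ∀ i j, Vr i j = V i (Fin.castLE (hr.trans (min_le_right _ _)) j))
    (E₂ : Matrix (Fin p₁ × Fin s₁) (Fin p₂ × Fin s₂) ℝ)
    (htrunc : A = (Ur ⊗ₖ (1 : Matrix (Fin s₁) (Fin s₁) ℝ)) *
        blkdiag r r r (fun i => S (Fin.castLE hr i)) *
        ((Vr ⊗ₖ (1 : Matrix (Fin s₂) (Fin s₂) ℝ)))ᵀ + E₂) :
    frob E₂ ≤
      Real.sqrt (∑ i ∈ Finset.univ.filter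
        (fun i : Fin (min (s₁ * s₂) (p₁ * p₂)) => (i : ℕ) ≠ 0), σ i ^ 2) +
      Real.sqrt (∑ i ∈ Finset.univ.filter
        (fun i : Fin (min p₁ p₂) => r ≤ (i : ℕ)), frob (S i) ^ 2) := by
  have hp₁ : min p₁ p₂ ≤ p₁ := min_le_left _ _
  have hp₂ : min p₁ p₂ ≤ p₂ := min_le_right _ _
  set D := (U ⊗ₖ (1 : Matrix (Fin s₁) (Fin s₁) ℝ)) *
    blkdiag p₁ p₂ (min p₁ p₂) (fun k => if r ≤ (k : ℕ) then S k else 0) *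
    (V ⊗ₖ (1 : Matrix (Fin s₂) (Fin s₂) ℝ))ᵀ
  have hE₂ : E₂ = E₁ + D := by
    have hUr' : Ur = U.submatrix id (Fin.castLE (hr.trans hp₁)) := Matrix.ext hUr
    have hVr' : Vr = V.submatrix id (Fin.castLE (hr.trans hp₂)) := Matrix.ext hVr
    have h := htrunc.symm.trans hfull
    rw [kronecker_one_mul_blkdiag_mul_transpose_eq_truncation_add hp₁ hp₂ hr, ← hUr', ← hVr',
      add_right_comm, add_assoc] at h
    exact add_left_cancel h
  have hD : frob D = √(∑ i ∈ Finset.univ.filter (fun i : Fin (min p₁ p₂) => r ≤ (i : ℕ)),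
      frob (S i) ^ 2) := by
    rw [frob_mul_mul_transpose (transpose_mul_self_kronecker_one hU)
      (transpose_mul_self_kronecker_one hV), frob_blkdiag hp₁ hp₂, Finset.sum_filter]
    refine congrArg _ (Finset.sum_congr rfl fun k _ => ?_)
    split_ifs <;> simp [frob]
  calc frob E₂ ≤ frob E₁ + frob D := hE₂ ▸ frob_add_le E₁ D
    _ = _ := by rw [hE₁, hD]

/-- truncated SVD-STP error bound: let `A ∈ ℝ^{n₁×n₂}` with `s₁ ∣ n₁`,
`s₂ ∣ n₂` (`p₁ = n₁/s₁`, `p₂ = n₂/s₂`), let `σ̃₁ ≥ ⋯ ≥ σ̃_q ≥ 0` be the singular values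
of the rearrangement `Ã` (given by a thin SVD, `q = min{s₁s₂, n₁n₂/(s₁s₂)}`), let
`A = U ⋉ Σ ⋉ Vᵀ + E₁` be the full SVD-STP of `A` (with `Σ = blkdiag(S₁,…,S_p)`,
`p = min{p₁,p₂}` and `‖E₁‖_F = √(∑_{i=2}^q σ̃ᵢ²)`), and for `r ≤ p` let
`A = U_r ⋉ Σ_r ⋉ V_rᵀ + E₂` be the truncated SVD-STP.  Then
`‖E₂‖_F ≤ √(∑_{i=2}^q σ̃ᵢ²) + √(∑_{i=r+1}^p ‖Sᵢ‖_F²)`. -/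
theorem truncated_svd_stp_error_bound {p₁ s₁ p₂ s₂ r : ℕ}
    (hr : r ≤ min p₁ p₂)
    (A : Matrix (Fin p₁ × Fin s₁) (Fin p₂ × Fin s₂) ℝ)
    -- the singular values of the rearrangement Ã, via a thin SVD
    (σ : Fin (min (s₁ * s₂) (p₁ * p₂)) → ℝ)
    (P : Matrix (Fin p₂ × Fin p₁) (Fin (min (s₁ * s₂) (p₁ * p₂))) ℝ)
    (Q : Matrix (Fin s₂ × Fin s₁) (Fin (min (s₁ * s₂) (p₁ * p₂))) ℝ)
    (hP : Pᵀ * P = 1) (hQ : Qᵀ * Q = 1)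
    (hσ : Antitone σ) (hσ0 : ∀ i, 0 ≤ σ i)
    (hAre : rearrange A = P * Matrix.diagonal σ * Qᵀ)
    -- the full SVD-STP of A
    (U : Matrix (Fin p₁) (Fin p₁) ℝ) (V : Matrix (Fin p₂) (Fin p₂) ℝ)
    (hU : Uᵀ * U = 1) (hU' : U * Uᵀ = 1) (hV : Vᵀ * V = 1) (hV' : V * Vᵀ = 1)
    (S : Fin (min p₁ p₂) → Matrix (Fin s₁) (Fin s₂) ℝ)
    (hS : Antitone (fun i => frob (S i)))
    (E₁ : Matrix (Fin p₁ × Fin s₁) (Fin p₂ × Fin s₂) ℝ)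
    (hfull : A = (U ⊗ₖ (1 : Matrix (Fin s₁) (Fin s₁) ℝ)) * blkdiag p₁ p₂ (min p₁ p₂) S *
        ((V ⊗ₖ (1 : Matrix (Fin s₂) (Fin s₂) ℝ)))ᵀ + E₁)
    (hE₁ : frob E₁ = Real.sqrt (∑ i ∈ Finset.univ.filter
        (fun i : Fin (min (s₁ * s₂) (p₁ * p₂)) => (i : ℕ) ≠ 0), σ i ^ 2))
    -- the truncated SVD-STP of A
    (Ur : Matrix (Fin p₁) (Fin r) ℝ) (Vr : Matrix (Fin p₂) (Fin r) ℝ)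
    (hUr : ∀ i j, Ur i j = U i (Fin.castLE (hr.trans (min_le_left _ _)) j))
    (hVr : ∀ i j, Vr i j = V i (Fin.castLE (hr.trans (min_le_right _ _)) j))
    (E₂ : Matrix (Fin p₁ × Fin s₁) (Fin p₂ × Fin s₂) ℝ)
    (htrunc : A = (Ur ⊗ₖ (1 : Matrix (Fin s₁) (Fin s₁) ℝ)) *
        blkdiag r r r (fun i => S (Fin.castLE hr i)) *
        ((Vr ⊗ₖ (1 : Matrix (Fin s₂) (Fin s₂) ℝ)))ᵀ + E₂) :
    frob E₂ ≤
      Real.sqrt (∑ i ∈ Finset.univ.filter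
        (fun i : Fin (min (s₁ * s₂) (p₁ * p₂)) => (i : ℕ) ≠ 0), σ i ^ 2) +
      Real.sqrt (∑ i ∈ Finset.univ.filter
        (fun i : Fin (min p₁ p₂) => r ≤ (i : ℕ)), frob (S i) ^ 2) :=
  truncated_svd_stp_error_bound_general hr A σ U V hU hV S E₁ hfull hE₁ Ur Vr hUr hVr E₂ htrunc
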